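/- arXiv:1011.1566 — 2 statements merged into one kernel-verified Lean document; each statement's English description precedes it below -/
import Mathlib

section
/- For σ² > 0, m > 1, and α = α_crit the positive root of mα² + σ²(m+1)α − σ² = 0, the function S(p) = 2 log(1 + p/(σ² + α(1−p))) + 2 log(1 + (1−p)/(σ² + mαp)) is constant in p on the interval where all denominators are positive; equivalently, dS/dp = 0 for all such p. -/
/-!
The two rate factors `1 + p/(σ² + α(1-p))` and `1 + (1-p)/(σ² + mαp)` are ratios of quadratics in
`p`, and their product is `(σ² + 1)/σ²` identically in `p` precisely when
`mα² + σ²(m+1)α - σ² = 0`. So at `α = α_crit` the sum-rate equals `2 log (1 + 1/σ²)` on the open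
set where both denominators are positive, and its derivative vanishes there.
-/

open Filter Topology

noncomputable def sumRate (σ2 m α x : ℝ) : ℝ :=
  2 * Real.log (1 + x / (σ2 + α * (1 - x))) + 2 * Real.log (1 + (1 - x) / (σ2 + m * α * x))

lemma rate_factors_mul_eq_of_root {σ2 m α x : ℝ} (hσ : σ2 ≠ 0)
    (hroot : m * α ^ 2 + σ2 * (m + 1) * α - σ2 = 0)
    (h1 : σ2 + α * (1 - x) ≠ 0) (h2 : σ2 + m * α * x ≠ 0) :
    (1 + x / (σ2 + α * (1 - x))) * (1 + (1 - x) / (σ2 + m * α * x)) = 1 + 1 / σ2 := by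
  rw [one_add_div h1, one_add_div h2, one_add_div hσ, div_mul_div_comm,
    div_eq_div_iff (mul_ne_zero h1 h2) hσ]
  linear_combination (x ^ 2 - x) * hroot

lemma sumRate_eq_of_root {σ2 m α x : ℝ} (hσ : 0 < σ2)
    (hroot : m * α ^ 2 + σ2 * (m + 1) * α - σ2 = 0)
    (h1 : σ2 + α * (1 - x) ≠ 0) (h2 : σ2 + m * α * x ≠ 0) :
    sumRate σ2 m α x = 2 * Real.log (1 + 1 / σ2) := by
  have hprod := rate_factors_mul_eq_of_root hσ.ne' hroot h1 h2
  have hne : (1 + x / (σ2 + α * (1 - x))) * (1 + (1 - x) / (σ2 + m * α * x)) ≠ 0 := by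
    rw [hprod]; positivity
  obtain ⟨hne1, hne2⟩ := mul_ne_zero_iff.mp hne
  rw [sumRate, ← mul_add, ← Real.log_mul hne1 hne2, hprod]

theorem sum_rate_constant_at_alpha_crit_general (σ2 m α : ℝ) (hσ : 0 < σ2)
    (hroot : m * α ^ 2 + σ2 * (m + 1) * α - σ2 = 0) :
    ∀ p : ℝ, 0 < σ2 + α * (1 - p) → 0 < σ2 + m * α * p →
      HasDerivAt (fun x : ℝ =>
          2 * Real.log (1 + x / (σ2 + α * (1 - x))) +
          2 * Real.log (1 + (1 - x) / (σ2 + m * α * x)))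
        0 p := by
  intro p h1 h2
  have hnear : ∀ᶠ x in 𝓝 p, 0 < σ2 + α * (1 - x) ∧ 0 < σ2 + m * α * x :=
    (continuousAt_const.eventually_lt (g := fun x ↦ σ2 + α * (1 - x)) (by fun_prop) h1).and
      (continuousAt_const.eventually_lt (g := fun x ↦ σ2 + m * α * x) (by fun_prop) h2)
  refine (hasDerivAt_const p (2 * Real.log (1 + 1 / σ2))).congr_of_eventuallyEq ?_
  filter_upwards [hnear] with x hx
  exact sumRate_eq_of_root hσ hroot hx.1.ne' hx.2.ne'

/-- At the critical interference level α = α_crit (the positive root of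
mα² + σ²(m+1)α − σ² = 0), the sum-rate S(p) is constant in p: dS/dp = 0
wherever the denominators are positive. -/
theorem sum_rate_constant_at_alpha_crit (σ2 m α : ℝ) (hσ : 0 < σ2) (hm : 1 < m)
    (hα : 0 < α) (hroot : m * α ^ 2 + σ2 * (m + 1) * α - σ2 = 0) :
    ∀ p : ℝ, 0 < σ2 + α * (1 - p) → 0 < σ2 + m * α * p →
      HasDerivAt (fun x : ℝ =>
          2 * Real.log (1 + x / (σ2 + α * (1 - x))) +
          2 * Real.log (1 + (1 - x) / (σ2 + m * α * x)))
        0 p :=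
  sum_rate_constant_at_alpha_crit_general σ2 m α hσ hroot
end

section
/- Fix constants μ ∈ ℝ, c : Fin N → ℝ, and bounds 0 ≤ pmax(k). Define p*(k) = min(max(μ − c(k), 0), pmax(k)). Then p* maximizes ∑_k log(1 + p(k)/c'(k)) over {p : 0 ≤ p(k) ≤ pmax(k), ∑_k p(k) = P_T} whenever c'(k) = c(k) > 0 for all k and ∑_k p*(k) = P_T; that is, the clipped waterfilling solution satisfies the KKT conditions and is optimal for the concave problem. -/
/-!
The objective is a sum of concave functions, so each summand lies below its tangent at `p*`:
`log (1 + p/c) ≤ log (1 + p*/c) + (p - p*) / (c + p*)`. Clipping makes the marginal gain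
`1 / (c + p*)` of every channel compare with `1 / μ` exactly as the KKT conditions require,
`(p - p*) (μ - c - p*) ≤ 0`, so the first-order term is at most `∑ (p - p*) / μ = 0`.
If `μ ≤ 0` nothing is poured, the budget is `0`, and the only feasible point is `p* = 0`.
-/

open Finset Real

namespace Waterfilling

lemma log_sub_log_le_div_sub_one {x y : ℝ} (hx : 0 < x) (hy : 0 < y) :
    log x - log y ≤ x / y - 1 := by
  rw [← log_div hx.ne' hy.ne']
  exact log_le_sub_one_of_pos (div_pos hx hy)

lemma log_one_add_div_sub_le {c p q : ℝ} (hc : 0 < c) (hp : 0 < c + p) (hq : 0 < c + q) :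
    log (1 + p / c) - log (1 + q / c) ≤ (p - q) / (c + q) := by
  have one_add_div : ∀ r, 1 + r / c = (c + r) / c := fun r => by field_simp
  rw [one_add_div, one_add_div]
  calc log ((c + p) / c) - log ((c + q) / c)
      ≤ (c + p) / c / ((c + q) / c) - 1 :=
        log_sub_log_le_div_sub_one (div_pos hp hc) (div_pos hq hc)
    _ = (p - q) / (c + q) := by field_simp; ring

lemma clip_nonneg {a u : ℝ} (hu : 0 ≤ u) : 0 ≤ min (max a 0) u :=
  le_min (le_max_right a 0) hu

lemma clip_eq_zero {a u : ℝ} (ha : a ≤ 0) (hu : 0 ≤ u) : min (max a 0) u = 0 := by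
  rw [max_eq_right ha, min_eq_left hu]

lemma sub_clip_mul_sub_clip_nonpos {μ c p u : ℝ} (hp : 0 ≤ p) (hpu : p ≤ u) :
    (p - min (max (μ - c) 0) u) * (μ - (c + min (max (μ - c) 0) u)) ≤ 0 := by
  rcases le_total (μ - c) 0 with h | h
  · rw [clip_eq_zero h (hp.trans hpu)]
    nlinarith
  · rw [max_eq_left h]
    rcases le_total (μ - c) u with h' | h'
    · rw [min_eq_left h']
      rw [add_sub_cancel, sub_self, mul_zero]
    · rw [min_eq_right h']
      nlinarith

lemma sum_div_nonpos_of_complementary_slackness {ι : Type*} [Fintype ι] {μ : ℝ} (hμ : 0 < μ)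
    {p s d : ι → ℝ} (hd : ∀ k, 0 < d k) (hsum : ∑ k, p k = ∑ k, s k)
    (hslack : ∀ k, (p k - s k) * (μ - d k) ≤ 0) :
    ∑ k, (p k - s k) / d k ≤ 0 := by
  have hterm : ∀ k, (p k - s k) / d k ≤ (p k - s k) / μ := fun k => by
    rw [div_le_div_iff₀ (hd k) hμ]
    nlinarith [hslack k]
  calc ∑ k, (p k - s k) / d k
      ≤ ∑ k, (p k - s k) / μ := sum_le_sum fun k _ => hterm k
    _ = 0 := by rw [← sum_div, sum_sub_distrib, hsum, sub_self, zero_div]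

lemma eq_zero_of_sum_eq_zero {ι : Type*} [Fintype ι] {p : ι → ℝ} (hp : ∀ k, 0 ≤ p k)
    (hsum : ∑ k, p k = 0) : p = 0 := by
  funext k
  exact (sum_eq_zero_iff_of_nonneg fun k _ => hp k).1 hsum k (mem_univ k)

end Waterfilling

open Waterfilling in
theorem waterfilling_optimal_general {N : ℕ} (μ PT : ℝ)
    (c pmax : Fin N → ℝ) (hc : ∀ k, 0 < c k)
    (pstar : Fin N → ℝ)
    (hpstar : ∀ k, pstar k = min (max (μ - c k) 0) (pmax k))
    (hsum : ∑ k, pstar k = PT) :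
    ∀ p : Fin N → ℝ, (∀ k, 0 ≤ p k ∧ p k ≤ pmax k) → (∑ k, p k = PT) →
      ∑ k, Real.log (1 + p k / c k) ≤ ∑ k, Real.log (1 + pstar k / c k) := by
  intro p hp hpsum
  have hpmax : ∀ k, 0 ≤ pmax k := fun k => (hp k).1.trans (hp k).2
  rcases le_or_gt μ 0 with hμ | hμ
  · have hpstar0 : pstar = 0 := funext fun k => by
      rw [hpstar k, clip_eq_zero (by linarith [hc k]) (hpmax k), Pi.zero_apply]
    have hp0 : p = 0 :=
      eq_zero_of_sum_eq_zero (fun k => (hp k).1) (by simp [hpsum, ← hsum, hpstar0])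
    rw [hp0, hpstar0]
  · have hden : ∀ k, 0 < c k + pstar k := fun k =>
      add_pos_of_pos_of_nonneg (hc k) (hpstar k ▸ clip_nonneg (hpmax k))
    have hgrad : ∑ k, (p k - pstar k) / (c k + pstar k) ≤ 0 :=
      sum_div_nonpos_of_complementary_slackness hμ hden (hpsum.trans hsum.symm) fun k => by
        rw [hpstar k]; exact sub_clip_mul_sub_clip_nonpos (hp k).1 (hp k).2
    have htangent : ∀ k, log (1 + p k / c k) - log (1 + pstar k / c k)
        ≤ (p k - pstar k) / (c k + pstar k) := fun k =>
      log_one_add_div_sub_le (hc k) (by linarith [hc k, (hp k).1]) (hden k)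
    have := sum_le_sum fun k (_ : k ∈ univ) => htangent k
    rw [sum_sub_distrib] at this
    linarith

/-- The clipped waterfilling solution p*(k) = [μ − c(k)]₀^{pmax(k)} is optimal
for the single-user concave rate maximization over the capped simplex. -/
theorem waterfilling_optimal {N : ℕ} (hN : 0 < N) (μ PT : ℝ)
    (c pmax : Fin N → ℝ) (hc : ∀ k, 0 < c k) (hpmax : ∀ k, 0 ≤ pmax k)
    (pstar : Fin N → ℝ)
    (hpstar : ∀ k, pstar k = min (max (μ - c k) 0) (pmax k))
    (hsum : ∑ k, pstar k = PT) :
    ∀ p : Fin N → ℝ, (∀ k, 0 ≤ p k ∧ p k ≤ pmax k) → (∑ k, p k = PT) →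
      ∑ k, Real.log (1 + p k / c k) ≤ ∑ k, Real.log (1 + pstar k / c k) :=
  waterfilling_optimal_general μ PT c pmax hc pstar hpstar hsum
end
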